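/- For every k ∈ ℕ the following limits hold as r → ∞: A^0_k(r)/log^k(r) → 1, A^0_k(r)/B^0(r) → 0, A^1_0(r)/A^0_k(r) → 0, and A^1_k(r)/log^k(A^1_0(r)) → 1. -/

import Mathlib

open Real MeasureTheory Filter Topology Set

/-- `F(u) = a - log a + log u`. -/
noncomputable def Fa (a : ℝ) : ℝ → ℝ := fun u => a - Real.log a + Real.log u

/-- `F̃(u) = a · ∏_{k=0}^∞ (F^k(u)/a)`. -/
noncomputable def Ftilde (a : ℝ) (u : ℝ) : ℝ := a * ∏' k : ℕ, ((Fa a)^[k] u / a)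

/-- `φ(u) = a + ∫_a^u dt / F̃(t)`. -/
noncomputable def phiFun (a : ℝ) (u : ℝ) : ℝ := a + ∫ t in a..u, 1 / Ftilde a t

/-- The super-logarithm: `L(r) = φ(ar) - a` for `r ≥ 1` and `L(r) = -L(1/r)` for `0 < r < 1`. -/
noncomputable def superLog (a : ℝ) (r : ℝ) : ℝ :=
  if 1 ≤ r then phiFun a (a * r) - a else -(phiFun a (a * (1 / r)) - a)

/-- `A^0_k(r) = F^k(ar)`. -/
noncomputable def A0 (a : ℝ) (k : ℕ) (r : ℝ) : ℝ := (Fa a)^[k] (a * r)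

/-- `A^1_k(r) = F^k(φ(ar))` (with `A^1_0(r) = φ(ar)`). -/
noncomputable def A1 (a : ℝ) (k : ℕ) (r : ℝ) : ℝ := (Fa a)^[k] (phiFun a (a * r))

/-- `B^0(r) = F̃(ar)/(ar)`. -/
noncomputable def B0 (a : ℝ) (r : ℝ) : ℝ := Ftilde a (a * r) / (a * r)

/-!
Since `F u - a ≤ (u - a) / a`, the logarithms of the factors of `F̃` decay geometrically, so
`F̃ = a · exp (∑ₖ log (Fᵏ u / a))` and every partial product is at most `F̃ / a`. Two partial
products matter: the one over `{0, k, k + 1}` gives `B⁰ ≥ A⁰ₖ A⁰ₖ₊₁ / a²`, and the one over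
`j ≤ k` says `1 / F̃ ≤ aᵏ (Fᵏ⁺¹)'`, which integrates to `φ(u) ≤ aᵏ Fᵏ⁺¹(u)`; both reduce the
middle limits to `F(v) / v → 0`. The shift `F̃(F u) = (a / u) F̃(u)` and the substitution
`t = F s` give `φ(u) - a = a (φ(F u) - a)`, so `φ` grows geometrically along the backward orbit
of `a + 1` and tends to infinity. The comparisons with iterated logarithms are an induction on
`(b + log f) / log h → 1`, valid whenever `f / h` has a nonzero limit and `h → ∞`.
-/

section Fa

variable {a u : ℝ}

lemma Fa_self : Fa a a = a := by simp [Fa]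

lemma hasDerivAt_Fa (hu : u ≠ 0) : HasDerivAt (Fa a) u⁻¹ u :=
  (hasDerivAt_log hu).const_add _

lemma monotoneOn_Fa : MonotoneOn (Fa a) (Ioi 0) := fun _ hu _ _ huv => by
  simpa [Fa] using log_le_log hu huv

lemma tendsto_Fa_atTop : Tendsto (Fa a) atTop atTop :=
  tendsto_atTop_add_const_left _ _ tendsto_log_atTop

lemma tendsto_Fa_div_self : Tendsto (fun u => Fa a u / u) atTop (𝓝 0) := by
  have h := (tendsto_const_nhds (x := a - log a)).div_atTop tendsto_id |>.add
    isLittleO_log_id_atTop.tendsto_div_nhds_zero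
  rw [zero_add] at h
  refine h.congr fun u => ?_
  simp only [Fa, id, add_div]

lemma mapsTo_Fa (ha : 0 < a) : MapsTo (Fa a) (Ici a) (Ici a) := fun u (hu : a ≤ u) => by
  have := log_le_log ha hu
  simp only [Fa, mem_Ici]
  linarith

lemma le_iterate_Fa (ha : 0 < a) (hu : a ≤ u) (n : ℕ) : a ≤ (Fa a)^[n] u :=
  (mapsTo_Fa ha).iterate n hu

lemma iterate_Fa_pos (ha : 0 < a) (hu : a ≤ u) (n : ℕ) : 0 < (Fa a)^[n] u :=
  ha.trans_le (le_iterate_Fa ha hu n)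

lemma Fa_sub_le (ha : 0 < a) (hu : a ≤ u) : Fa a u - a ≤ (u - a) / a := by
  calc Fa a u - a = log (u / a) := by rw [log_div (by linarith) ha.ne', Fa]; ring
    _ ≤ u / a - 1 := log_le_sub_one_of_pos (div_pos (ha.trans_le hu) ha)
    _ = (u - a) / a := by field_simp

lemma iterate_Fa_sub_le (ha : 0 < a) (hu : a ≤ u) (n : ℕ) :
    (Fa a)^[n] u - a ≤ (u - a) / a ^ n := by
  induction n with
  | zero => simp
  | succ n ih =>
    rw [Function.iterate_succ_apply']
    calc Fa a ((Fa a)^[n] u) - a ≤ ((Fa a)^[n] u - a) / a :=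
          Fa_sub_le ha (le_iterate_Fa ha hu n)
      _ ≤ (u - a) / a ^ n / a := by gcongr
      _ = (u - a) / a ^ (n + 1) := by rw [pow_succ, div_div]

lemma monotoneOn_iterate_Fa (ha : 0 < a) (n : ℕ) : MonotoneOn (Fa a)^[n] (Ici a) := by
  induction n with
  | zero => exact monotone_id.monotoneOn _
  | succ n ih =>
    rw [Function.iterate_succ']
    exact (monotoneOn_Fa.mono fun _ (hu : a ≤ _) => ha.trans_le hu).comp ih
      ((mapsTo_Fa ha).iterate n)

lemma hasDerivAt_iterate_Fa (ha : 0 < a) (hu : a ≤ u) (n : ℕ) :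
    HasDerivAt (Fa a)^[n] (∏ j ∈ Finset.range n, ((Fa a)^[j] u)⁻¹) u := by
  induction n with
  | zero => simpa using hasDerivAt_id u
  | succ n ih =>
    rw [Function.iterate_succ', Finset.prod_range_succ, mul_comm]
    exact (hasDerivAt_Fa (iterate_Fa_pos ha hu n).ne').comp u ih

end Fa

noncomputable def logProdIter (a u : ℝ) : ℝ := ∑' k : ℕ, log ((Fa a)^[k] u / a)

section Ftilde

variable {a u : ℝ}

lemma log_iterate_Fa_div_nonneg (ha : 0 < a) (hu : a ≤ u) (k : ℕ) :
    0 ≤ log ((Fa a)^[k] u / a) :=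
  log_nonneg ((one_le_div ha).2 (le_iterate_Fa ha hu k))

lemma log_iterate_Fa_div_le (ha : 0 < a) (hu : a ≤ u) (k : ℕ) :
    log ((Fa a)^[k] u / a) ≤ (u - a) / a * a⁻¹ ^ k := by
  calc log ((Fa a)^[k] u / a) ≤ (Fa a)^[k] u / a - 1 :=
        log_le_sub_one_of_pos (div_pos (iterate_Fa_pos ha hu k) ha)
    _ = ((Fa a)^[k] u - a) / a := by field_simp
    _ ≤ (u - a) / a ^ k / a := by gcongr; exact iterate_Fa_sub_le ha hu k
    _ = (u - a) / a * a⁻¹ ^ k := by rw [inv_pow]; ring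

lemma summable_log_iterate_Fa_div (ha : 1 < a) (hu : a ≤ u) :
    Summable fun k => log ((Fa a)^[k] u / a) :=
  .of_nonneg_of_le (log_iterate_Fa_div_nonneg (by linarith) hu)
    (log_iterate_Fa_div_le (by linarith) hu)
    ((summable_geometric_of_lt_one (by positivity) (inv_lt_one_of_one_lt₀ ha)).mul_left _)

lemma Ftilde_eq_mul_exp (ha : 1 < a) (hu : a ≤ u) : Ftilde a u = a * exp (logProdIter a u) := by
  have hprod := (summable_log_iterate_Fa_div ha hu).hasSum.rexp
  have hexp : (rexp ∘ fun k => log ((Fa a)^[k] u / a)) = fun k => (Fa a)^[k] u / a :=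
    funext fun k => exp_log (div_pos (iterate_Fa_pos (by linarith) hu k) (by linarith))
  rw [hexp] at hprod
  rw [Ftilde, hprod.tprod_eq, logProdIter]

lemma Ftilde_pos (ha : 1 < a) (hu : a ≤ u) : 0 < Ftilde a u := by
  rw [Ftilde_eq_mul_exp ha hu]
  exact mul_pos (by linarith) (exp_pos _)

lemma prod_iterate_Fa_div_le (ha : 1 < a) (hu : a ≤ u) (s : Finset ℕ) :
    ∏ k ∈ s, (Fa a)^[k] u / a ≤ Ftilde a u / a := by
  have ha0 : 0 < a := by linarith
  rw [Ftilde_eq_mul_exp ha hu, mul_div_cancel_left₀ _ ha0.ne']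
  calc ∏ k ∈ s, (Fa a)^[k] u / a = exp (∑ k ∈ s, log ((Fa a)^[k] u / a)) := by
        rw [exp_sum]
        exact Finset.prod_congr rfl fun k _ =>
          (exp_log (div_pos (iterate_Fa_pos ha0 hu k) ha0)).symm
    _ ≤ exp (logProdIter a u) := exp_le_exp.2 <|
        (summable_log_iterate_Fa_div ha hu).sum_le_tsum s
          fun k _ => log_iterate_Fa_div_nonneg ha0 hu k

lemma monotoneOn_Ftilde (ha : 1 < a) : MonotoneOn (Ftilde a) (Ici a) := by
  have ha0 : 0 < a := by linarith
  intro u (hu : a ≤ u) v (hv : a ≤ v) huv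
  rw [Ftilde_eq_mul_exp ha hu, Ftilde_eq_mul_exp ha hv]
  gcongr
  refine (summable_log_iterate_Fa_div ha hu).tsum_le_tsum (fun k => ?_)
    (summable_log_iterate_Fa_div ha hv)
  have hk := iterate_Fa_pos ha0 hu k
  gcongr
  exact monotoneOn_iterate_Fa ha0 k hu hv huv

lemma Ftilde_Fa (ha : 1 < a) (hu : a ≤ u) : Ftilde a (Fa a u) = a / u * Ftilde a u := by
  have ha0 : 0 < a := by linarith
  have hshift : logProdIter a u = log (u / a) + logProdIter a (Fa a u) := by
    rw [logProdIter, (summable_log_iterate_Fa_div ha hu).tsum_eq_zero_add]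
    simp only [Function.iterate_zero_apply, Function.iterate_succ_apply, logProdIter]
  rw [Ftilde_eq_mul_exp ha (mapsTo_Fa ha0 hu), Ftilde_eq_mul_exp ha hu, hshift, exp_add,
    exp_log (div_pos (ha0.trans_le hu) ha0)]
  field_simp [(ha0.trans_le hu).ne']

end Ftilde

section phiFun

variable {a u : ℝ}

lemma antitoneOn_one_div_Ftilde (ha : 1 < a) : AntitoneOn (fun t => 1 / Ftilde a t) (Ici a) :=
  fun _ hu _ hv huv =>
    one_div_le_one_div_of_le (Ftilde_pos ha hu) (monotoneOn_Ftilde ha hu hv huv)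

lemma intervalIntegrable_one_div_Ftilde (ha : 1 < a) {v : ℝ} (hu : a ≤ u) (hv : a ≤ v) :
    IntervalIntegrable (fun t => 1 / Ftilde a t) volume u v :=
  ((antitoneOn_one_div_Ftilde ha).mono fun _ ht => (le_min hu hv).trans ht.1).intervalIntegrable

lemma monotoneOn_phiFun (ha : 1 < a) : MonotoneOn (phiFun a) (Ici a) := by
  intro u (hu : a ≤ u) v (hv : a ≤ v) huv
  have hsplit := intervalIntegral.integral_add_adjacent_intervals
    (intervalIntegrable_one_div_Ftilde ha le_rfl hu) (intervalIntegrable_one_div_Ftilde ha hu hv)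
  have hnonneg : 0 ≤ ∫ t in u..v, 1 / Ftilde a t := intervalIntegral.integral_nonneg huv
    fun t ht => (one_div_pos.2 (Ftilde_pos ha (hu.trans ht.1))).le
  rw [phiFun, phiFun, ← hsplit]
  linarith

lemma le_phiFun (ha : 1 < a) (hu : a ≤ u) : a ≤ phiFun a u := by
  simpa [phiFun] using monotoneOn_phiFun ha self_mem_Ici hu hu

lemma lt_phiFun_add_one (ha : 1 < a) : a < phiFun a (a + 1) := by
  have hpos := intervalIntegral.intervalIntegral_pos_of_pos_on
    (intervalIntegrable_one_div_Ftilde ha le_rfl (by linarith))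
    (fun t ht => one_div_pos.2 (Ftilde_pos ha ht.1.le)) (by linarith : a < a + 1)
  rw [phiFun]
  linarith

lemma phiFun_sub_self (ha : 1 < a) (hu : a ≤ u) :
    phiFun a u - a = a * (phiFun a (Fa a u) - a) := by
  have ha0 : 0 < a := by linarith
  have hmem : ∀ x ∈ Icc (min a u) (max a u), 0 < x := fun x hx =>
    ha0.trans_le ((min_eq_left hu).symm.trans_le hx.1)
  have hcov := intervalIntegral.integral_comp_mul_deriv_of_deriv_nonneg
    (f := Fa a) (g := fun t => 1 / Ftilde a t) (f' := fun t => t⁻¹)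
    (fun x hx => (hasDerivAt_Fa (hmem x hx).ne').continuousAt.continuousWithinAt)
    (fun x hx => hasDerivAt_Fa (hmem x (Ioo_subset_Icc_self hx)).ne')
    (fun x hx => (inv_pos.2 (hmem x (Ioo_subset_Icc_self hx))).le)
  have hcongr : ∫ x in a..u, ((fun t => 1 / Ftilde a t) ∘ Fa a) x * x⁻¹
      = ∫ x in a..u, a⁻¹ * (1 / Ftilde a x) := by
    refine intervalIntegral.integral_congr fun x hx => ?_
    rw [uIcc_of_le hu] at hx
    have hx0 : 0 < x := ha0.trans_le hx.1
    have hF := Ftilde_pos ha hx.1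
    simp only [Function.comp, Ftilde_Fa ha hx.1]
    field_simp
  rw [Fa_self, hcongr, intervalIntegral.integral_const_mul] at hcov
  rw [phiFun, phiFun, ← hcov]
  field_simp
  ring

lemma exists_phiFun_sub_self_eq (ha : 1 < a) (n : ℕ) :
    ∃ u, a ≤ u ∧ phiFun a u - a = a ^ n * (phiFun a (a + 1) - a) := by
  have ha0 : 0 < a := by linarith
  induction n with
  | zero => exact ⟨a + 1, by linarith, by simp⟩
  | succ n ih =>
    obtain ⟨u, hu, hφu⟩ := ih
    have hFv : Fa a (a * exp (u - a)) = u := by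
      rw [Fa, log_mul ha0.ne' (exp_pos _).ne', log_exp]
      ring
    have hv : a ≤ a * exp (u - a) :=
      le_mul_of_one_le_right ha0.le (one_le_exp (by linarith))
    refine ⟨a * exp (u - a), hv, ?_⟩
    rw [phiFun_sub_self ha hv, hFv, hφu, pow_succ]
    ring

lemma tendsto_phiFun_atTop (ha : 1 < a) : Tendsto (phiFun a) atTop atTop := by
  refine tendsto_atTop_atTop.2 fun b => ?_
  obtain ⟨n, hn⟩ := ((tendsto_pow_atTop_atTop_of_one_lt ha).atTop_mul_const
    (sub_pos.2 (lt_phiFun_add_one ha))).eventually_ge_atTop (b - a) |>.exists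
  obtain ⟨u, hu, hφu⟩ := exists_phiFun_sub_self_eq ha n
  exact ⟨u, fun v hv => by linarith [monotoneOn_phiFun ha hu (hu.trans hv) hv]⟩

lemma one_div_Ftilde_le (ha : 1 < a) (hu : a ≤ u) (k : ℕ) :
    1 / Ftilde a u ≤ a ^ k * ∏ j ∈ Finset.range (k + 1), ((Fa a)^[j] u)⁻¹ := by
  have ha0 : 0 < a := by linarith
  have hP : 0 < ∏ j ∈ Finset.range (k + 1), (Fa a)^[j] u :=
    Finset.prod_pos fun j _ => iterate_Fa_pos ha0 hu j
  have hprod := prod_iterate_Fa_div_le ha hu (Finset.range (k + 1))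
  rw [Finset.prod_div_distrib, Finset.prod_const, Finset.card_range,
    div_le_div_iff₀ (by positivity) ha0, pow_succ] at hprod
  rw [Finset.prod_inv_distrib, ← div_eq_mul_inv, one_div_le (Ftilde_pos ha hu) (by positivity),
    one_div_div, div_le_iff₀ (by positivity)]
  nlinarith

lemma phiFun_le (ha : 1 < a) (hu : a ≤ u) (k : ℕ) : phiFun a u ≤ a ^ k * (Fa a)^[k + 1] u := by
  have ha0 : 0 < a := by linarith
  have hint := intervalIntegral.integral_le_sub_of_hasDeriv_right_of_le hu
    (g := fun t => a ^ k * (Fa a)^[k + 1] t)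
    (fun t ht => ((hasDerivAt_iterate_Fa ha0 ht.1 (k + 1)).continuousAt.const_mul _).continuousWithinAt)
    (fun t ht => ((hasDerivAt_iterate_Fa ha0 ht.1.le (k + 1)).const_mul _).hasDerivWithinAt)
    (((antitoneOn_one_div_Ftilde ha).mono Icc_subset_Ici_self).integrableOn_isCompact isCompact_Icc)
    (fun t ht => one_div_Ftilde_le ha ht.1.le k)
  rw [Function.iterate_fixed Fa_self] at hint
  have hpow : a ≤ a ^ (k + 1) := le_self_pow₀ ha.le (by omega)
  rw [phiFun, ← pow_succ] at *
  linarith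

end phiFun

section IteratedLog

variable {α : Type*} {l : Filter α} {f h : α → ℝ} {b c : ℝ}

lemma tendsto_const_add_log_div_log (hc : c ≠ 0) (hfh : Tendsto (fun x => f x / h x) l (𝓝 c))
    (hh : Tendsto h l atTop) : Tendsto (fun x => (b + log (f x)) / log (h x)) l (𝓝 1) := by
  have hlogh : Tendsto (fun x => log (h x)) l atTop := tendsto_log_atTop.comp hh
  have hlim : Tendsto (fun x => 1 + (b + log (f x / h x)) / log (h x)) l (𝓝 1) := by
    simpa using tendsto_const_nhds.add ((tendsto_const_nhds.add (hfh.log hc)).div_atTop hlogh)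
  refine hlim.congr' ?_
  filter_upwards [hfh.eventually_ne hc, hlogh.eventually_ne_atTop 0] with x hfhx hlog
  obtain ⟨hfx, hhx⟩ := div_ne_zero_iff.1 hfhx
  rw [log_div hfx hhx]
  field_simp
  ring

lemma tendsto_iterate_Fa_div_iterate_log (a : ℝ) (hc : c ≠ 0)
    (hfh : Tendsto (fun x => f x / h x) l (𝓝 c)) (hh : Tendsto h l atTop) {k : ℕ} (hk : 1 ≤ k) :
    Tendsto (fun x => (Fa a)^[k] (f x) / log^[k] (h x)) l (𝓝 1) := by
  induction k, hk using Nat.le_induction with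
  | base => exact tendsto_const_add_log_div_log hc hfh hh
  | succ k _ ih =>
    simp only [Function.iterate_succ_apply']
    exact tendsto_const_add_log_div_log one_ne_zero ih ((tendsto_log_atTop.iterate k).comp hh)

end IteratedLog

section Limits

variable {a : ℝ} {k : ℕ}

lemma iterate_Fa_div_mul_le_Ftilde_div (ha : 1 < a) {u : ℝ} (hu : a ≤ u) (hk : 1 ≤ k) :
    (Fa a)^[k] u / a * ((Fa a)^[k + 1] u / a) ≤ Ftilde a u / u := by
  have ha0 : 0 < a := by linarith
  have h := prod_iterate_Fa_div_le ha hu {0, k, k + 1}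
  rw [Finset.prod_insert (by simp; omega), Finset.prod_pair (by omega),
    Function.iterate_zero_apply, le_div_iff₀ ha0] at h
  rw [le_div_iff₀ (ha0.trans_le hu)]
  calc _ = u / a * ((Fa a)^[k] u / a * ((Fa a)^[k + 1] u / a)) * a := by field_simp
    _ ≤ Ftilde a u := h

lemma tendsto_A0_div_B0 (ha : 1 < a) (hk : 1 ≤ k) :
    Tendsto (fun r => A0 a k r / B0 a r) atTop (𝓝 0) := by
  have ha0 : 0 < a := by linarith
  have hlim : Tendsto (fun r => a ^ 2 / A0 a (k + 1) r) atTop (𝓝 0) :=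
    tendsto_const_nhds.div_atTop
      ((tendsto_Fa_atTop.iterate (k + 1)).comp (tendsto_id.const_mul_atTop ha0))
  have hu : ∀ᶠ r in atTop, a ≤ a * r :=
    (eventually_ge_atTop 1).mono fun r hr => le_mul_of_one_le_right ha0.le hr
  refine tendsto_of_tendsto_of_tendsto_of_le_of_le' tendsto_const_nhds hlim ?_ ?_ <;>
    filter_upwards [hu] with r hu
  · exact div_nonneg (iterate_Fa_pos ha0 hu k).le
      (div_pos (Ftilde_pos ha hu) (ha0.trans_le hu)).le
  · have hX := iterate_Fa_pos ha0 hu k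
    have hY := iterate_Fa_pos ha0 hu (k + 1)
    calc A0 a k r / B0 a r ≤ A0 a k r / (A0 a k r / a * (A0 a (k + 1) r / a)) :=
          div_le_div_of_nonneg_left hX.le (by positivity)
            (iterate_Fa_div_mul_le_Ftilde_div ha hu hk)
      _ = a ^ 2 / A0 a (k + 1) r := by
          simp only [A0] at *
          field_simp

lemma tendsto_A1_zero_div_A0 (ha : 1 < a) (k : ℕ) :
    Tendsto (fun r => A1 a 0 r / A0 a k r) atTop (𝓝 0) := by
  have ha0 : 0 < a := by linarith
  have hlim : Tendsto (fun r => a ^ k * (Fa a (A0 a k r) / A0 a k r)) atTop (𝓝 0) := by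
    simpa [A0] using (tendsto_Fa_div_self.comp
      ((tendsto_Fa_atTop.iterate k).comp (tendsto_id.const_mul_atTop ha0))).const_mul (a ^ k)
  have hu : ∀ᶠ r in atTop, a ≤ a * r :=
    (eventually_ge_atTop 1).mono fun r hr => le_mul_of_one_le_right ha0.le hr
  refine tendsto_of_tendsto_of_tendsto_of_le_of_le' tendsto_const_nhds hlim ?_ ?_ <;>
    filter_upwards [hu] with r hu
  · exact div_nonneg (ha0.trans_le (le_phiFun ha hu)).le (iterate_Fa_pos ha0 hu k).le
  · have hX := iterate_Fa_pos ha0 hu k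
    rw [← mul_div_assoc]
    gcongr
    simpa [A1, A0, Function.iterate_succ_apply'] using phiFun_le ha hu k

end Limits

/-- For every `k ∈ ℕ` (`k ≥ 1`), as `r → ∞`: `A^0_k(r)/log^k(r) → 1`,
`A^0_k(r)/B^0(r) → 0`, `A^1_0(r)/A^0_k(r) → 0`, and `A^1_k(r)/log^k(A^1_0(r)) → 1`. -/
theorem stmt8 (a : ℝ) (ha : 1 < a) (k : ℕ) (hk : 1 ≤ k) :
    Filter.Tendsto (fun r : ℝ => A0 a k r / Real.log^[k] r) Filter.atTop (nhds 1) ∧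
    Filter.Tendsto (fun r : ℝ => A0 a k r / B0 a r) Filter.atTop (nhds 0) ∧
    Filter.Tendsto (fun r : ℝ => A1 a 0 r / A0 a k r) Filter.atTop (nhds 0) ∧
    Filter.Tendsto (fun r : ℝ => A1 a k r / Real.log^[k] (A1 a 0 r)) Filter.atTop (nhds 1) := by
  have ha0 : 0 < a := by linarith
  have hphi : Tendsto (fun r => phiFun a (a * r)) atTop atTop :=
    (tendsto_phiFun_atTop ha).comp (tendsto_id.const_mul_atTop ha0)
  refine ⟨?_, tendsto_A0_div_B0 ha hk, tendsto_A1_zero_div_A0 ha k, ?_⟩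
  · refine tendsto_iterate_Fa_div_iterate_log (f := fun r => a * r) (h := id) a ha0.ne' ?_
      tendsto_id hk
    exact tendsto_const_nhds.congr' <| (eventually_ne_atTop 0).mono fun r hr =>
      (mul_div_cancel_right₀ a hr).symm
  · refine tendsto_iterate_Fa_div_iterate_log a one_ne_zero ?_ hphi hk
    exact tendsto_const_nhds.congr' <| (hphi.eventually_ne_atTop 0).mono fun r hr =>
      (div_self hr).symm
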